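/- arXiv:2407.18159 — 3 statements merged into one kernel-verified Lean document; each statement's English description precedes it below -/
import Mathlib

section
/- For a constant reference d, the trajectory r(t) = φ_r(t,0)·r(0) + (1 − φ_r(t,0))·d, with φ_r(t,0) = cosh((T−t)/α)/cosh(T/α), solves the closed-loop ODE r'(t) = −(1/α²)p(t)(r(t) − d), where p(t) = α·tanh((T−t)/α). -/
/-!
The error `r(t) - d = φ(t) (r(0) - d)` is a multiple of the transition factor
`φ(t) = cosh((T - t)/α) / cosh(T/α)`, so it suffices that `φ` itself solves the linear ODE
`φ' = -(1/α) tanh((T - t)/α) φ`, which is `cosh' = sinh` and `tanh = sinh / cosh`.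
-/

open Real

theorem HasDerivAt.affine_combination_sub_of_linear {φ : ℝ → ℝ} {k t : ℝ} (r0 d : ℝ)
    (hφ : HasDerivAt φ (k * φ t) t) :
    HasDerivAt (fun s => φ s * r0 + (1 - φ s) * d) (k * ((φ t * r0 + (1 - φ t) * d) - d)) t :=
  ((hφ.mul_const r0).add ((hφ.const_sub 1).mul_const d)).congr_deriv (by ring)

theorem hasDerivAt_cosh_sub_div (T α t : ℝ) :
    HasDerivAt (fun s => cosh ((T - s) / α)) (-(sinh ((T - t) / α) / α)) t := by
  have hin : HasDerivAt (fun s => (T - s) / α) (-1 / α) t := by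
    simpa using ((hasDerivAt_id t).const_sub T).div_const α
  exact ((hasDerivAt_cosh _).comp t hin).congr_deriv (by ring)

theorem hasDerivAt_cosh_sub_div_div_const {α : ℝ} (hα : α ≠ 0) (T c t : ℝ) :
    HasDerivAt (fun s => cosh ((T - s) / α) / c)
      (-(1 / α ^ 2) * (α * tanh ((T - t) / α)) * (cosh ((T - t) / α) / c)) t := by
  refine ((hasDerivAt_cosh_sub_div T α t).div_const c).congr_deriv ?_
  have hcosh : cosh ((T - t) / α) ≠ 0 := (cosh_pos _).ne'
  rw [tanh_eq_sinh_div_cosh]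
  field_simp

theorem stmt3_general (α T d r0 : ℝ) (hα : 0 < α) :
    ∀ t ∈ Set.Icc (0 : ℝ) T,
      HasDerivAt
        (fun s => (Real.cosh ((T - s) / α) / Real.cosh (T / α)) * r0
          + (1 - Real.cosh ((T - s) / α) / Real.cosh (T / α)) * d)
        (-(1 / α ^ 2) * (α * Real.tanh ((T - t) / α))
          * (((Real.cosh ((T - t) / α) / Real.cosh (T / α)) * r0
              + (1 - Real.cosh ((T - t) / α) / Real.cosh (T / α)) * d) - d)) t := by
  intro t _
  exact (hasDerivAt_cosh_sub_div_div_const hα.ne' T (cosh (T / α)) t).affine_combination_sub_of_linear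
    r0 d

/-- For a constant reference `d`, the trajectory
`r(t) = φ_r(t,0) r(0) + (1 − φ_r(t,0)) d`, with `φ_r(t,0) = cosh((T−t)/α)/cosh(T/α)`,
solves the closed-loop ODE `r'(t) = −(1/α²) p(t) (r(t) − d)`, with
`p(t) = α tanh((T−t)/α)`. -/
theorem stmt3 (α T d r0 : ℝ) (hα : 0 < α) (hT : 0 < T) :
    ∀ t ∈ Set.Icc (0 : ℝ) T,
      HasDerivAt
        (fun s => (Real.cosh ((T - s) / α) / Real.cosh (T / α)) * r0
          + (1 - Real.cosh ((T - s) / α) / Real.cosh (T / α)) * d)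
        (-(1 / α ^ 2) * (α * Real.tanh ((T - t) / α))
          * (((Real.cosh ((T - t) / α) / Real.cosh (T / α)) * r0
              + (1 - Real.cosh ((T - t) / α) / Real.cosh (T / α)) * d) - d)) t :=
  stmt3_general α T d r0 hα
end

section
/- For constant reference d, the optimal trajectory r(t) = φ_r(t,0)r(0) + (1−φ_r(t,0))d with control u(t) = −(1/α²)p(t)(r(t)−d) attains cost ∫_0^T ((r(t)−d)² + α²u(t)²) dt = (r(0) − d)²·α·tanh(T/α). -/
/-!
Along the optimal trajectory the deviation from the reference is `r(t) - d = φ (r(0) - d)` and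
`α u = -tanh((T-t)/α) (r(t) - d)`, so the running cost is
`φ² (1 + tanh²) (r(0) - d)² = cosh(2(T-t)/α) (r(0) - d)² / cosh²(T/α)`.
Integrating gives `(α/2) sinh(2T/α) (r(0) - d)² / cosh²(T/α) = (r(0) - d)² α tanh(T/α)`.
-/

open Real

lemma optimal_running_cost_eq (α x y a b : ℝ) (hα : α ≠ 0) :
    (cosh x / cosh y * a + (1 - cosh x / cosh y) * b - b) ^ 2
        + α ^ 2 * (-(1 / α ^ 2) * (α * tanh x)
            * (cosh x / cosh y * a + (1 - cosh x / cosh y) * b - b)) ^ 2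
      = (a - b) ^ 2 / cosh y ^ 2 * cosh (2 * x) := by
  have hcx : cosh x ≠ 0 := (cosh_pos x).ne'
  have hcy : cosh y ≠ 0 := (cosh_pos y).ne'
  rw [cosh_two_mul, tanh_eq_sinh_div_cosh]
  field_simp
  ring

lemma hasDerivAt_sinh_two_mul_sub_div (α T t : ℝ) (hα : α ≠ 0) :
    HasDerivAt (fun s => -(α / 2) * sinh (2 * ((T - s) / α))) (cosh (2 * ((T - t) / α))) t := by
  have hinner : HasDerivAt (fun s => 2 * ((T - s) / α)) (-(2 / α)) t :=
    ((((hasDerivAt_id t).const_sub T).div_const α).const_mul 2).congr_deriv (by ring)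
  exact (hinner.sinh.const_mul (-(α / 2))).congr_deriv (by field_simp)

lemma integral_cosh_two_mul_sub_div (α T : ℝ) (hα : α ≠ 0) :
    ∫ t in (0:ℝ)..T, cosh (2 * ((T - t) / α)) = α / 2 * sinh (2 * (T / α)) := by
  rw [intervalIntegral.integral_eq_sub_of_hasDerivAt
    (fun t _ => hasDerivAt_sinh_two_mul_sub_div α T t hα)
    (Continuous.intervalIntegrable (by fun_prop) _ _)]
  simp

theorem stmt4_general (α T d r0 : ℝ) (hα : 0 < α) :
    (∫ t in (0:ℝ)..T,
      (((Real.cosh ((T - t) / α) / Real.cosh (T / α)) * r0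
          + (1 - Real.cosh ((T - t) / α) / Real.cosh (T / α)) * d - d) ^ 2
        + α ^ 2 * (-(1 / α ^ 2) * (α * Real.tanh ((T - t) / α))
            * (((Real.cosh ((T - t) / α) / Real.cosh (T / α)) * r0
                + (1 - Real.cosh ((T - t) / α) / Real.cosh (T / α)) * d) - d)) ^ 2))
      = (r0 - d) ^ 2 * α * Real.tanh (T / α) := by
  simp_rw [optimal_running_cost_eq α _ _ r0 d hα.ne']
  rw [intervalIntegral.integral_const_mul, integral_cosh_two_mul_sub_div α T hα.ne',
    sinh_two_mul, tanh_eq_sinh_div_cosh]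
  have hc : cosh (T / α) ≠ 0 := (cosh_pos _).ne'
  field_simp

/-- For constant reference `d`, the optimal trajectory
`r(t) = φ_r(t,0) r(0) + (1−φ_r(t,0)) d` with control `u(t) = −(1/α²) p(t) (r(t)−d)`
attains cost `∫_0^T ((r−d)² + α² u²) dt = (r(0) − d)² α tanh(T/α)`. -/
theorem stmt4 (α T d r0 : ℝ) (hα : 0 < α) (hT : 0 < T) :
    (∫ t in (0:ℝ)..T,
      (((Real.cosh ((T - t) / α) / Real.cosh (T / α)) * r0
          + (1 - Real.cosh ((T - t) / α) / Real.cosh (T / α)) * d - d) ^ 2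
        + α ^ 2 * (-(1 / α ^ 2) * (α * Real.tanh ((T - t) / α))
            * (((Real.cosh ((T - t) / α) / Real.cosh (T / α)) * r0
                + (1 - Real.cosh ((T - t) / α) / Real.cosh (T / α)) * d) - d)) ^ 2))
      = (r0 - d) ^ 2 * α * Real.tanh (T / α) :=
  stmt4_general α T d r0 hα
end

section
/- The steady-state frequency response from reference d to state r of the cascade ẏ = (1/α)y + d (anticausal) followed by ṙ = −(1/α)r − (1/α²)y is H(ω) = 1/(α²ω² + 1). Concretely, for d(t) = cos(ωt), the bounded solution pair (y, r) with y bounded on ℝ satisfies r(t) = cos(ωt)/(α²ω² + 1). -/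
/-!
Both equations have the form `f' = k f + u` with `k ≠ 0`. The difference of two solutions is
`c exp (k t)`, which is bounded on `ℝ` only if `c = 0`, so each equation has at most one bounded
solution. It therefore suffices to exhibit bounded sinusoidal solutions, found by matching
coefficients of `cos (ω t)` and `sin (ω t)`:
`y = (α² ω sin (ω t) - α cos (ω t)) / (α² ω² + 1)` and then `r = cos (ω t) / (α² ω² + 1)`.
-/

open Real

lemma eq_mul_exp_of_hasDerivAt {k : ℝ} {f : ℝ → ℝ} (hf : ∀ t, HasDerivAt f (k * f t) t)
    (t : ℝ) : f t = f 0 * exp (k * t) := by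
  have hderiv : ∀ t, HasDerivAt (fun t => f t * exp (-k * t)) 0 t := fun t => by
    have hexp : HasDerivAt (fun t => exp (-k * t)) (exp (-k * t) * -k) t := by
      simpa using ((hasDerivAt_id t).const_mul (-k)).exp
    exact ((hf t).mul hexp).congr_deriv (by ring)
  have hconst : f t * exp (-k * t) = f 0 := by
    simpa using is_const_of_deriv_eq_zero (fun x => (hderiv x).differentiableAt)
      (fun x => (hderiv x).deriv) t 0
  calc f t = f t * exp (-k * t) * exp (k * t) := by rw [mul_assoc, ← exp_add]; simp
    _ = f 0 * exp (k * t) := by rw [hconst]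

lemma eq_zero_of_hasDerivAt_of_abs_le {k : ℝ} (hk : k ≠ 0) {f : ℝ → ℝ}
    (hf : ∀ t, HasDerivAt f (k * f t) t) {C : ℝ} (hC : ∀ t, |f t| ≤ C) (t : ℝ) : f t = 0 := by
  suffices h0 : f 0 = 0 by rw [eq_mul_exp_of_hasDerivAt hf t, h0, zero_mul]
  by_contra h0
  have hpos : 0 < |f 0| := abs_pos.mpr h0
  set s := C / |f 0|
  -- at time `s / k` the solution has grown to `|f 0| exp s ≥ |f 0| (s + 1) = C + |f 0|`
  have hgrowth : |f (s / k)| = |f 0| * exp s := by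
    rw [eq_mul_exp_of_hasDerivAt hf, mul_div_cancel₀ s hk, abs_mul, abs_exp]
  have hexp : |f 0| * (s + 1) ≤ |f 0| * exp s := by gcongr; exact add_one_le_exp s
  have hs : |f 0| * s = C := mul_div_cancel₀ C hpos.ne'
  linarith [hC (s / k)]

lemma eq_of_hasDerivAt_of_abs_le {k : ℝ} (hk : k ≠ 0) {u f g : ℝ → ℝ}
    (hf : ∀ t, HasDerivAt f (k * f t + u t) t) (hg : ∀ t, HasDerivAt g (k * g t + u t) t)
    (hfb : ∃ C, ∀ t, |f t| ≤ C) (hgb : ∃ C, ∀ t, |g t| ≤ C) : f = g := by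
  obtain ⟨Cf, hCf⟩ := hfb
  obtain ⟨Cg, hCg⟩ := hgb
  have hdiff : ∀ t, HasDerivAt (f - g) (k * (f - g) t) t := fun t =>
    ((hf t).sub (hg t)).congr_deriv (by simp only [Pi.sub_apply]; ring)
  have hdiffb : ∀ t, |(f - g) t| ≤ Cf + Cg := fun t =>
    (abs_sub (f t) (g t)).trans (add_le_add (hCf t) (hCg t))
  funext t
  exact sub_eq_zero.mp (eq_zero_of_hasDerivAt_of_abs_le hk hdiff hdiffb t)

section SteadyState

variable (α ω : ℝ)

noncomputable def steadyStateY (t : ℝ) : ℝ :=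
  (α ^ 2 * ω * sin (ω * t) - α * cos (ω * t)) / (α ^ 2 * ω ^ 2 + 1)

noncomputable def steadyStateR (t : ℝ) : ℝ :=
  cos (ω * t) / (α ^ 2 * ω ^ 2 + 1)

lemma hasDerivAt_cos_mul (t : ℝ) : HasDerivAt (fun t => cos (ω * t)) (-sin (ω * t) * ω) t := by
  simpa using ((hasDerivAt_id t).const_mul ω).cos

lemma hasDerivAt_sin_mul (t : ℝ) : HasDerivAt (fun t => sin (ω * t)) (cos (ω * t) * ω) t := by
  simpa using ((hasDerivAt_id t).const_mul ω).sin

variable {α}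

lemma hasDerivAt_steadyStateY (hα : α ≠ 0) (t : ℝ) :
    HasDerivAt (steadyStateY α ω) ((1 / α) * steadyStateY α ω t + cos (ω * t)) t := by
  have h := (((hasDerivAt_sin_mul ω t).const_mul (α ^ 2 * ω)).sub
    ((hasDerivAt_cos_mul ω t).const_mul α)).div_const (α ^ 2 * ω ^ 2 + 1)
  refine h.congr_deriv ?_
  unfold steadyStateY
  field_simp
  ring

lemma hasDerivAt_steadyStateR (hα : α ≠ 0) (t : ℝ) :
    HasDerivAt (steadyStateR α ω)
      (-(1 / α) * steadyStateR α ω t + -(1 / α ^ 2) * steadyStateY α ω t) t := by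
  refine ((hasDerivAt_cos_mul ω t).div_const (α ^ 2 * ω ^ 2 + 1)).congr_deriv ?_
  unfold steadyStateR steadyStateY
  field_simp
  ring

variable (α)

lemma abs_steadyStateY_le (t : ℝ) : |steadyStateY α ω t| ≤ |α ^ 2 * ω| + |α| := by
  have hK : 1 ≤ α ^ 2 * ω ^ 2 + 1 := by nlinarith [sq_nonneg (α * ω)]
  calc |steadyStateY α ω t|
      ≤ |α ^ 2 * ω * sin (ω * t) - α * cos (ω * t)| := by
        rw [steadyStateY, abs_div, abs_of_pos (show 0 < α ^ 2 * ω ^ 2 + 1 by linarith)]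
        exact div_le_self (abs_nonneg _) hK
    _ ≤ |α ^ 2 * ω| * 1 + |α| * 1 := by
        refine (abs_sub _ _).trans ?_
        rw [abs_mul (α ^ 2 * ω), abs_mul α]
        gcongr
        exacts [abs_sin_le_one _, abs_cos_le_one _]
    _ = |α ^ 2 * ω| + |α| := by ring

lemma abs_steadyStateR_le (t : ℝ) : |steadyStateR α ω t| ≤ 1 := by
  have hK : 1 ≤ α ^ 2 * ω ^ 2 + 1 := by nlinarith [sq_nonneg (α * ω)]
  rw [steadyStateR, abs_div, abs_of_pos (show 0 < α ^ 2 * ω ^ 2 + 1 by linarith)]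
  exact (div_le_self (abs_nonneg _) hK).trans (abs_cos_le_one _)

end SteadyState

/-- Steady-state frequency response of the cascade `ẏ = (1/α) y + d` (anticausal)
followed by `ṙ = −(1/α) r − (1/α²) y` is `H(ω) = 1/(α²ω² + 1)`: for
`d(t) = cos(ωt)`, the bounded solution pair `(y, r)` satisfies
`r(t) = cos(ωt)/(α²ω² + 1)`. -/
theorem stmt15 (α ω : ℝ) (hα : 0 < α) (y r : ℝ → ℝ)
    (hy : ∀ t : ℝ, HasDerivAt y ((1 / α) * y t + Real.cos (ω * t)) t)
    (hr : ∀ t : ℝ, HasDerivAt r (-(1 / α) * r t - (1 / α ^ 2) * y t) t)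
    (hyb : ∃ C : ℝ, ∀ t, |y t| ≤ C) (hrb : ∃ C : ℝ, ∀ t, |r t| ≤ C) :
    ∀ t : ℝ, r t = Real.cos (ω * t) / (α ^ 2 * ω ^ 2 + 1) := by
  have hα₀ : α ≠ 0 := hα.ne'
  have hy_eq : y = steadyStateY α ω :=
    eq_of_hasDerivAt_of_abs_le (one_div_ne_zero hα₀) hy (hasDerivAt_steadyStateY ω hα₀) hyb
      ⟨_, abs_steadyStateY_le α ω⟩
  have hr' : ∀ t, HasDerivAt r (-(1 / α) * r t + -(1 / α ^ 2) * steadyStateY α ω t) t :=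
    fun t => (hr t).congr_deriv (by rw [hy_eq]; ring)
  have hr_eq : r = steadyStateR α ω :=
    eq_of_hasDerivAt_of_abs_le (neg_ne_zero.mpr (one_div_ne_zero hα₀)) hr'
      (hasDerivAt_steadyStateR ω hα₀) hrb ⟨_, abs_steadyStateR_le α ω⟩
  intro t
  rw [hr_eq, steadyStateR]
end
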